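/- Stuttering property: if μ ⟹ μ̄, μ̄ ⟹ ν and μ ≈_b ν, then μ ≈_b μ̄. -/

import Mathlib

open scoped BigOperators
open Classical

namespace PBB

structure Distr (X : Type) where
  f : X → ℝ
  nonneg : ∀ x, 0 ≤ f x
  fin : (Function.support f).Finite
  sum_one : ∑ᶠ x, f x = 1

namespace Distr

variable {X : Type}

noncomputable def dirac (E : X) : Distr X where
  f := fun x => if x = E then 1 else 0
  nonneg := fun x => by by_cases h : x = E <;> simp [h]
  fin := Set.Finite.subset (Set.finite_singleton E) (by
    intro x hx
    simp only [Function.mem_support] at hx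
    by_contra h
    simp only [Set.mem_singleton_iff] at h
    simp [h] at hx)
  sum_one := by
    rw [finsum_eq_single _ E (by intro x hx; simp [hx])]
    simp

noncomputable def mix (r : ℝ) (h0 : 0 ≤ r) (h1 : r ≤ 1) (μ ν : Distr X) : Distr X where
  f := fun x => r * μ.f x + (1 - r) * ν.f x
  nonneg := fun x =>
    add_nonneg (mul_nonneg h0 (μ.nonneg x)) (mul_nonneg (by linarith) (ν.nonneg x))
  fin := Set.Finite.subset (μ.fin.union ν.fin) (by
    intro x hx
    simp only [Function.mem_support] at hx
    by_contra h
    simp only [Set.mem_union, Function.mem_support, not_or, not_not] at h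
    simp [h.1, h.2] at hx)
  sum_one := by
    have hf : (Function.support fun x => r * μ.f x).Finite :=
      Set.Finite.subset μ.fin (by
        intro x hx
        simp only [Function.mem_support] at hx ⊢
        intro h; simp [h] at hx)
    have hg : (Function.support fun x => (1 - r) * ν.f x).Finite :=
      Set.Finite.subset ν.fin (by
        intro x hx
        simp only [Function.mem_support] at hx ⊢
        intro h; simp [h] at hx)
    rw [finsum_add_distrib hf hg, ← mul_finsum μ.f r, ← mul_finsum ν.f (1 - r),
      μ.sum_one, ν.sum_one]
    ring

end Distr

def IsMix {X : Type} (r : ℝ) (μ ν ξ : Distr X) : Prop :=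
  ∀ x, ξ.f x = r * μ.f x + (1 - r) * ν.f x

def IsCombo {X I : Type} [Fintype I] (p : I → ℝ) (μs : I → Distr X) (ξ : Distr X) : Prop :=
  (∀ i, 0 ≤ p i) ∧ (∑ i, p i = 1) ∧ ∀ x, ξ.f x = ∑ i, p i * (μs i).f x

/-! ### The probabilistic process calculus -/

mutual
/-- Non-deterministic processes: `E ::= 0 | α.P | E + E`. -/
inductive PE (Act : Type) : Type where
  | zero : PE Act
  | pre : Act → PP Act → PE Act
  | plus : PE Act → PE Act → PE Act

/-- Probabilistic processes: `P ::= ∂(E) | P ⊕_r P` with `r ∈ (0,1)`. -/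
inductive PP (Act : Type) : Type where
  | dirac : PE Act → PP Act
  | pchoice : PP Act → (r : ℝ) → 0 < r → r < 1 → PP Act → PP Act
end

variable {Act : Type}

/-- The distribution `⟦P⟧` denoted by a probabilistic process. -/
noncomputable def den : PP Act → Distr (PE Act)
  | .dirac E => Distr.dirac E
  | .pchoice P r h0 h1 Q => Distr.mix r h0.le h1.le (den P) (den Q)

/-- The transition relation `E →α μ` on non-deterministic processes. -/
inductive pstep : PE Act → Act → Distr (PE Act) → Prop where
  | pre (α : Act) (P : PP Act) : pstep (.pre α P) α (den P)
  | left {E₁ E₂ : PE Act} {α : Act} {μ : Distr (PE Act)} :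
      pstep E₁ α μ → pstep (.plus E₁ E₂) α μ
  | right {E₁ E₂ : PE Act} {α : Act} {μ : Distr (PE Act)} :
      pstep E₂ α μ → pstep (.plus E₁ E₂) α μ

/-- The (combined) transition relation `μ →α μ'` on distributions. -/
def dstep (μ : Distr (PE Act)) (α : Act) (μ' : Distr (PE Act)) : Prop :=
  ∃ (I : Type) (_ : Fintype I) (p : I → ℝ) (Es : I → PE Act) (μs : I → Distr (PE Act)),
    IsCombo p (fun i => Distr.dirac (Es i)) μ ∧ IsCombo p μs μ' ∧
    ∀ i, pstep (Es i) α (μs i)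

variable (τ : Act)

/-- The partial silent step `μ →(τ) μ'`. -/
def ptau (μ μ' : Distr (PE Act)) : Prop :=
  dstep μ τ μ' ∨
  ∃ (s : ℝ) (μ₁ μ₂ μ₁' : Distr (PE Act)), 0 ≤ s ∧ s ≤ 1 ∧
    IsMix s μ₁ μ₂ μ ∧ IsMix s μ₁' μ₂ μ' ∧ dstep μ₁ τ μ₁'

/-- `μ ⟹ μ'`: the reflexive-transitive closure of `→(τ)`. -/
def wtau : Distr (PE Act) → Distr (PE Act) → Prop :=
  Relation.ReflTransGen (ptau τ)

/-- The optional step `μ →(α) μ'`. -/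
def optStep (μ : Distr (PE Act)) (α : Act) (μ' : Distr (PE Act)) : Prop :=
  dstep μ α μ' ∨ (α = τ ∧ ptau τ μ μ')

/-- Weak decomposability of a relation on distributions. -/
def WeaklyDecomposable (R : Distr (PE Act) → Distr (PE Act) → Prop) : Prop :=
  ∀ (I : Type) (_ : Fintype I) (p : I → ℝ) (μs : I → Distr (PE Act))
    (μ ν : Distr (PE Act)),
    R μ ν → IsCombo p μs μ →
    ∃ (ν' : Distr (PE Act)) (νs : I → Distr (PE Act)),
      wtau τ ν ν' ∧ R μ ν' ∧ IsCombo p νs ν' ∧ ∀ i, R (μs i) (νs i)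

/-- Decomposability of a relation on distributions. -/
def Decomposable (R : Distr (PE Act) → Distr (PE Act) → Prop) : Prop :=
  ∀ (I : Type) (_ : Fintype I) (p : I → ℝ) (μs : I → Distr (PE Act))
    (μ ν : Distr (PE Act)),
    R μ ν → IsCombo p μs μ →
    ∃ νs : I → Distr (PE Act), IsCombo p νs ν ∧ ∀ i, R (μs i) (νs i)

/-- Branching probabilistic bisimulation relations. -/
def IsBranchingBisim (R : Distr (PE Act) → Distr (PE Act) → Prop) : Prop :=
  Symmetric R ∧ WeaklyDecomposable τ R ∧
  ∀ μ ν α μ', R μ ν → dstep μ α μ' →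
    ∃ ν' ν'', wtau τ ν ν' ∧ optStep τ ν' α ν'' ∧ R μ ν' ∧ R μ' ν''

/-- Branching probabilistic bisimilarity `≈_b`. -/
def bb (μ ν : Distr (PE Act)) : Prop :=
  ∃ R, IsBranchingBisim τ R ∧ R μ ν

/-- Strong probabilistic bisimulation relations. -/
def IsStrongBisim (R : Distr (PE Act) → Distr (PE Act) → Prop) : Prop :=
  Symmetric R ∧ Decomposable R ∧
  ∀ μ ν α μ', R μ ν → dstep μ α μ' →
    ∃ ν', dstep ν α ν' ∧ R μ' ν'

/-- Strong probabilistic bisimilarity `∼`. -/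
def sb (μ ν : Distr (PE Act)) : Prop :=
  ∃ R, IsStrongBisim R ∧ R μ ν

/-- Rooted branching probabilistic bisimulation relations. -/
def IsRootedBranchingBisim (R : Distr (PE Act) → Distr (PE Act) → Prop) : Prop :=
  Symmetric R ∧ Decomposable R ∧
  ∀ μ ν α μ', R μ ν → dstep μ α μ' →
    ∃ ν', dstep ν α ν' ∧ bb τ μ' ν'

/-- Rooted branching probabilistic bisimilarity `≈_rb`. -/
def rbb (μ ν : Distr (PE Act)) : Prop :=
  ∃ R, IsRootedBranchingBisim τ R ∧ R μ ν

/-- `≈_b`-stability of a distribution. -/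
def Stable (μ : Distr (PE Act)) : Prop :=
  ∀ μ', wtau τ μ μ' → bb τ μ μ' → μ' = μ

/-- A state is rigid iff it admits no inert `τ`-transition. -/
def Rigid (E : PE Act) : Prop :=
  ¬ ∃ μ, pstep E τ μ ∧ bb τ (Distr.dirac E) μ

/-- `E ⊑ P`: every transition of `E` is matched by an optional transition of `⟦P⟧`
with branching probabilistically bisimilar target. -/
def sq (E : PE Act) (P : PP Act) : Prop :=
  ∀ α μ, pstep E α μ → ∃ ν, optStep τ (den P) α ν ∧ bb τ μ ν



/-! The pairs to be related are `(μ, μ̄)` and `(μ̄, μ)`. A move of `μ` is answered from `μ̄`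
by first running silently on to `ν` and then answering as `ν` does, since `μ ≈_b ν`; a move of
`μ̄` is answered by `μ` running silently to `μ̄` and then performing that very move. -/

section Transfer

def BranchingTransfer (R : Distr (PE Act) → Distr (PE Act) → Prop) (μ ν : Distr (PE Act)) :
    Prop :=
  (∀ (I : Type) (_ : Fintype I) (p : I → ℝ) (μs : I → Distr (PE Act)), IsCombo p μs μ →
    ∃ (ν' : Distr (PE Act)) (νs : I → Distr (PE Act)),
      wtau τ ν ν' ∧ R μ ν' ∧ IsCombo p νs ν' ∧ ∀ i, R (μs i) (νs i)) ∧
  ∀ α μ', dstep μ α μ' → ∃ ν' ν'', wtau τ ν ν' ∧ optStep τ ν' α ν'' ∧ R μ ν' ∧ R μ' ν''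

variable {τ} {R S : Distr (PE Act) → Distr (PE Act) → Prop} {μ ν ξ : Distr (PE Act)}

theorem isBranchingBisim_iff :
    IsBranchingBisim τ R ↔
      (∀ μ ν, R μ ν → R ν μ) ∧ ∀ μ ν, R μ ν → BranchingTransfer τ R μ ν := by
  constructor
  · rintro ⟨hsymm, hdec, htrans⟩
    exact ⟨hsymm, fun μ ν h => ⟨fun I _ p μs => hdec I _ p μs μ ν h,
      fun α μ' => htrans μ ν α μ' h⟩⟩
  · rintro ⟨hsymm, htrans⟩
    exact ⟨hsymm, fun I _ p μs μ ν h => (htrans μ ν h).1 I _ p μs,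
      fun μ ν α μ' h => (htrans μ ν h).2 α μ'⟩

namespace BranchingTransfer

theorem mono (hRS : R ≤ S) (h : BranchingTransfer τ R μ ν) : BranchingTransfer τ S μ ν := by
  refine ⟨fun I _ p μs hμ => ?_, fun α μ' hμ => ?_⟩
  · obtain ⟨ν', νs, hνν', hμν', hν', hs⟩ := h.1 I _ p μs hμ
    exact ⟨ν', νs, hνν', hRS _ _ hμν', hν', fun i => hRS _ _ (hs i)⟩
  · obtain ⟨ν', ν'', hνν', hstep, hμν', hμ'ν''⟩ := h.2 α μ' hμ
    exact ⟨ν', ν'', hνν', hstep, hRS _ _ hμν', hRS _ _ hμ'ν''⟩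

theorem of_wtau (hνξ : wtau τ ν ξ) (h : BranchingTransfer τ R μ ξ) :
    BranchingTransfer τ R μ ν := by
  refine ⟨fun I _ p μs hμ => ?_, fun α μ' hμ => ?_⟩
  · obtain ⟨ξ', ξs, hξξ', hrest⟩ := h.1 I _ p μs hμ
    exact ⟨ξ', ξs, hνξ.trans hξξ', hrest⟩
  · obtain ⟨ξ', ξ'', hξξ', hrest⟩ := h.2 α μ' hμ
    exact ⟨ξ', ξ'', hνξ.trans hξξ', hrest⟩

theorem refl (hR : ∀ μ, R μ μ) (μ : Distr (PE Act)) : BranchingTransfer τ R μ μ :=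
  ⟨fun _ _ _ μs hμ => ⟨μ, μs, .refl, hR μ, hμ, fun i => hR (μs i)⟩,
    fun _ μ' hμ => ⟨μ, μ', .refl, Or.inl hμ, hR μ, hR μ'⟩⟩

end BranchingTransfer

theorem isBranchingBisim_eq : IsBranchingBisim τ (@Eq (Distr (PE Act))) :=
  isBranchingBisim_iff.2 ⟨fun _ _ => Eq.symm, fun μ _ h => h ▸ .refl (fun _ => rfl) μ⟩

theorem bb_refl (μ : Distr (PE Act)) : bb τ μ μ :=
  ⟨Eq, isBranchingBisim_eq, rfl⟩

theorem bb_symm (h : bb τ μ ν) : bb τ ν μ := by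
  obtain ⟨R, hR, hμν⟩ := h
  exact ⟨R, hR, hR.1 hμν⟩

theorem branchingTransfer_bb (h : bb τ μ ν) : BranchingTransfer τ (bb τ) μ ν := by
  obtain ⟨R, hR, hμν⟩ := h
  exact ((isBranchingBisim_iff.1 hR).2 μ ν hμν).mono fun _ _ h => ⟨R, hR, h⟩

/-- Branching bisimulation up to `≈_b`. -/
theorem bb_of_branchingTransfer_sup (hsymm : ∀ μ ν, R μ ν → R ν μ)
    (htrans : ∀ μ ν, R μ ν → BranchingTransfer τ (bb τ ⊔ R) μ ν) (h : R μ ν) : bb τ μ ν := by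
  refine ⟨bb τ ⊔ R, isBranchingBisim_iff.2 ⟨?_, ?_⟩, Or.inr h⟩
  · rintro μ ν (hμν | hμν)
    exacts [Or.inl (bb_symm hμν), Or.inr (hsymm μ ν hμν)]
  · rintro μ ν (hμν | hμν)
    exacts [(branchingTransfer_bb hμν).mono le_sup_left, htrans μ ν hμν]

end Transfer

/-- Stuttering property. -/
theorem statement3 {Act : Type} (τ : Act) {μ μbar ν : Distr (PE Act)}
    (h1 : wtau τ μ μbar) (h2 : wtau τ μbar ν) (h : bb τ μ ν) :
    bb τ μ μbar := by
  let T : Distr (PE Act) → Distr (PE Act) → Prop :=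
    fun μ μbar => wtau τ μ μbar ∧ ∃ ν, wtau τ μbar ν ∧ bb τ μ ν
  refine bb_of_branchingTransfer_sup (R := Relation.SymmGen T) (fun _ _ => .symm) ?_
    (.of_rel ⟨h1, ν, h2, h⟩)
  rintro μ μbar (⟨-, ν, hμbarν, hμν⟩ | ⟨hμbarμ, -⟩)
  · exact ((branchingTransfer_bb hμν).of_wtau hμbarν).mono le_sup_left
  · exact ((BranchingTransfer.refl bb_refl μ).of_wtau hμbarμ).mono le_sup_left

end PBB
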